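/- Let n ≥ 1 and r ≥ 1 be integers, let q₁, …, q_r be pairwise coprime positive integers and let q = ∏_{j=1}^r q_j. For each j, let c_j ∈ ℤ satisfy c_j·∏_{i≠j} q_i ≡ 1 (mod q_j). Then for all A, B ∈ M_n(ℤ): K_n(A, B; q) = ∏_{j=1}^r K_n(c_j·A, c_j·B; q_j). -/

import Mathlib

/-!
Reducing modulo the `q_j` identifies `GL_n(ℤ/q)` with `∏_j GL_n(ℤ/q_j)` (Chinese remainder
theorem), and the phase `tr(ĀX + B̄X⁻¹)` commutes with reduction. Since
`∑_j c_j ∏_{i ≠ j} q_i ≡ 1 (mod q)`, the standard character `e_q(t) = e^{2πi t/q}` factors as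
`∏_j e_{q_j}(c_j t)`, so the sum over `GL_n(ℤ/q)` becomes the product of the sums over the
`GL_n(ℤ/q_j)`.
-/

open scoped BigOperators

/-- The matrix Kloosterman sum `K_n(A,B;q)`:
the sum over `X ∈ GL_n(ℤ/qℤ)` of `e^{2πi·tr(ĀX + B̄X⁻¹)/q}`,
where `Ā, B̄` are the reductions of `A, B` modulo `q`.
(We set it to `0` in the degenerate case `q = 0`.) -/
noncomputable def Kl (n q : ℕ) (A B : Matrix (Fin n) (Fin n) ℤ) : ℂ :=
  if h : q = 0 then 0
  else
    letI : NeZero q := ⟨h⟩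
    ∑ X : (Matrix (Fin n) (Fin n) (ZMod q))ˣ,
      Complex.exp (2 * (Real.pi : ℂ) * Complex.I *
        (((Matrix.trace
            ((A.map (Int.cast : ℤ → ZMod q)) * (X : Matrix (Fin n) (Fin n) (ZMod q)) +
              (B.map (Int.cast : ℤ → ZMod q)) *
                ((X⁻¹ : (Matrix (Fin n) (Fin n) (ZMod q))ˣ) :
                  Matrix (Fin n) (Fin n) (ZMod q)))).val : ℂ) / (q : ℂ)))

open Finset Function Matrix

lemma AddChar.map_sum_eq_prod {A M ι : Type*} [AddCommMonoid A] [CommMonoid M]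
    (ψ : AddChar A M) (s : Finset ι) (f : ι → A) :
    ψ (∑ i ∈ s, f i) = ∏ i ∈ s, ψ (f i) := by
  classical
  induction s using Finset.induction_on with
  | empty => simp
  | insert i s hi ih => rw [sum_insert hi, prod_insert hi, AddChar.map_add_eq_mul, ih]

instance Nat.neZero_prod {ι : Type*} [Fintype ι] (q : ι → ℕ) [∀ i, NeZero (q i)] :
    NeZero (∏ i, q i) :=
  ⟨prod_ne_zero_iff.mpr fun i _ => NeZero.ne (q i)⟩

namespace ZMod

lemma stdAddChar_natCast_mul {d k N : ℕ} [NeZero d] [NeZero N] (h : d * k = N) (s : ZMod N) :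
    stdAddChar ((k : ZMod N) * s) = stdAddChar (castHom (Dvd.intro k h) (ZMod d) s) := by
  obtain ⟨m, rfl⟩ := intCast_surjective s
  have hk : (k : ℂ) ≠ 0 := by
    exact_mod_cast right_ne_zero_of_mul (h.symm ▸ NeZero.ne N : d * k ≠ 0)
  have hd : (d : ℂ) ≠ 0 := NeZero.natCast_ne d ℂ
  rw [map_intCast, ← Int.cast_natCast k, ← Int.cast_mul, stdAddChar_coe, stdAddChar_coe, ← h]
  congr 1
  push_cast
  field_simp

variable {ι : Type*} [Fintype ι] [DecidableEq ι] {q : ι → ℕ} (c : ι → ℤ)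

lemma intCast_sum_mul_prod_erase_eq_one (hq : Pairwise (Nat.Coprime on q))
    (hc : ∀ j, (c j * ∏ i ∈ univ.erase j, (q i : ℤ)) ≡ 1 [ZMOD (q j : ℤ)]) :
    ((∑ j, c j * ∏ i ∈ univ.erase j, (q i : ℤ) : ℤ) : ZMod (∏ i, q i)) = 1 := by
  refine (prodEquivPi q hq).injective (funext fun j => ?_)
  rw [map_one, Pi.one_apply, prodEquivPi_apply, map_intCast, Int.cast_sum,
    sum_eq_single j (fun i _ hij => ?_) (by simp)]
  · exact_mod_cast (intCast_eq_intCast_iff _ _ _).mpr (hc j)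
  · rw [Int.cast_mul, Int.cast_prod]
    exact mul_eq_zero_of_right _ (prod_eq_zero (mem_erase.mpr ⟨Ne.symm hij, mem_univ j⟩)
      (by simp))

lemma stdAddChar_eq_prod_stdAddChar [∀ i, NeZero (q i)] (hq : Pairwise (Nat.Coprime on q))
    (hc : ∀ j, (c j * ∏ i ∈ univ.erase j, (q i : ℤ)) ≡ 1 [ZMOD (q j : ℤ)])
    (t : ZMod (∏ i, q i)) :
    stdAddChar t =
      ∏ j, stdAddChar ((c j : ZMod (q j)) * castHom (dvd_prod_of_mem q (mem_univ j)) _ t) := by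
  calc stdAddChar t
      = stdAddChar (((∑ j, c j * ∏ i ∈ univ.erase j, (q i : ℤ) : ℤ) : ZMod _) * t) := by
        rw [intCast_sum_mul_prod_erase_eq_one c hq hc, one_mul]
    _ = ∏ j, stdAddChar (((∏ i ∈ univ.erase j, q i : ℕ) : ZMod _) * ((c j : ZMod _) * t)) := by
        rw [Int.cast_sum, sum_mul, AddChar.map_sum_eq_prod]
        refine prod_congr rfl fun j _ => congrArg _ ?_
        push_cast
        ring
    _ = _ := prod_congr rfl fun j _ => by
        rw [stdAddChar_natCast_mul (mul_prod_erase univ q (mem_univ j)), map_mul, map_intCast]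

end ZMod

namespace Matrix.GeneralLinearGroup

variable {n : Type*} [Fintype n] [DecidableEq n]

noncomputable def zmodProdEquivPi {ι : Type*} [Fintype ι] (q : ι → ℕ)
    (hq : Pairwise (Nat.Coprime on q)) :
    GL n (ZMod (∏ i, q i)) ≃* Π i, GL n (ZMod (q i)) :=
  (Units.mapEquiv ((ZMod.prodEquivPi q hq).mapMatrix.trans piRingEquiv).toMulEquiv).trans
    MulEquiv.piUnits

lemma zmodProdEquivPi_apply {ι : Type*} [Fintype ι] (q : ι → ℕ)
    (hq : Pairwise (Nat.Coprime on q)) (X : GL n (ZMod (∏ i, q i))) (j : ι) :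
    zmodProdEquivPi q hq X j = map (ZMod.castHom (dvd_prod_of_mem q (mem_univ j)) _) X := by
  ext
  simp [zmodProdEquivPi, GeneralLinearGroup.map_apply]

end Matrix.GeneralLinearGroup

section KloostermanPhase

variable {n R S : Type*} [Fintype n] [DecidableEq n] [CommRing R] [CommRing S]

def klPhase (A B : Matrix n n ℤ) (X : GL n R) : R :=
  trace (A.map (Int.cast : ℤ → R) * (X : Matrix n n R) +
    B.map (Int.cast : ℤ → R) * ((X⁻¹ : GL n R) : Matrix n n R))

lemma klPhase_smul (c : ℤ) (A B : Matrix n n ℤ) (X : GL n R) :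
    klPhase (c • A) (c • B) X = c * klPhase A B X := by
  have hcast (M : Matrix n n ℤ) : (c • M).map (Int.cast : ℤ → R) = (c : R) • M.map Int.cast := by
    ext
    simp only [Matrix.map_apply, Matrix.smul_apply, smul_eq_mul, Int.cast_mul]
  rw [klPhase, klPhase, hcast, hcast, smul_mul, smul_mul, ← smul_add, trace_smul, smul_eq_mul]

lemma map_klPhase (f : R →+* S) (A B : Matrix n n ℤ) (X : GL n R) :
    f (klPhase A B X) = klPhase A B (GeneralLinearGroup.map f X) := by
  have hcast : ⇑f ∘ (Int.cast : ℤ → R) = Int.cast := funext (map_intCast f)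
  have hmap (Y : GL n R) : (GeneralLinearGroup.map f Y : Matrix n n S) = (Y : Matrix n n R).map f :=
    rfl
  rw [klPhase, klPhase, ← GeneralLinearGroup.map_inv, hmap, hmap, AddMonoidHom.map_trace f,
    ← RingHom.mapMatrix_apply, map_add, map_mul, map_mul]
  simp only [RingHom.mapMatrix_apply, Matrix.map_map, hcast]

end KloostermanPhase

lemma Kl_eq_sum_stdAddChar (n q : ℕ) [NeZero q] (A B : Matrix (Fin n) (Fin n) ℤ) :
    Kl n q A B = ∑ X : GL (Fin n) (ZMod q), ZMod.stdAddChar (klPhase A B X) := by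
  rw [Kl, dif_neg (NeZero.ne q)]
  refine Fintype.sum_congr _ _ fun X => ?_
  rw [ZMod.stdAddChar_apply, ZMod.toCircle_apply, mul_div_assoc]
  rfl

theorem matrix_kloosterman_multiplicative
    (n r : ℕ)
    (qf : Fin r → ℕ) (hqf : ∀ j, 0 < qf j)
    (hcop : ∀ i j, i ≠ j → Nat.Coprime (qf i) (qf j))
    (c : Fin r → ℤ)
    (hc : ∀ j, (c j * ∏ i ∈ Finset.univ.erase j, (qf i : ℤ)) ≡ 1 [ZMOD (qf j : ℤ)])
    (A B : Matrix (Fin n) (Fin n) ℤ) :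
    Kl n (∏ i, qf i) A B = ∏ j, Kl n (qf j) (c j • A) (c j • B) := by
  have : ∀ j, NeZero (qf j) := fun j => ⟨(hqf j).ne'⟩
  have hq : Pairwise (Nat.Coprime on qf) := hcop
  simp only [Kl_eq_sum_stdAddChar, Fintype.prod_sum]
  refine Fintype.sum_equiv (GeneralLinearGroup.zmodProdEquivPi qf hq).toEquiv _ _ fun X => ?_
  rw [ZMod.stdAddChar_eq_prod_stdAddChar c hq hc]
  refine prod_congr rfl fun j _ => ?_
  rw [MulEquiv.toEquiv_eq_coe, MulEquiv.coe_toEquiv, GeneralLinearGroup.zmodProdEquivPi_apply,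
    klPhase_smul, map_klPhase]
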